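/- In the setting of the preceding representation theorem, suppose moreover that H : U → ℝ is a C² function with ∂ᵢH = η̄ᵢ for all i ∈ {1,…,n}, where η̄ⱼ = (u²)^{−d}∂_{z^{j−2}}f for j ≥ 3, η̄₂ = (u²)^{−d}(−Σⱼ z^j∂_{z^j}f − (d−1)f + C₂), and η̄₁ = (u²)^{−d}(−Σ_{α=2}^r ∂_{z^{1(α)−2}}f + C₁) with d·C₁ = 0. Then there exists a constant C₃ such that on U: H = (u²)^{1−d}·f(z¹,…,z^{n−2}) + C₂·φ(u²) + C₁·u¹ + C₃, where φ(u²) = (u²)^{1−d}/(1−d) if d ≠ 1 and φ(u²) = ln u² if d = 1. -/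

import Mathlib

/-!
The right-hand side `g` is differentiable wherever `u² > 0`, and the chain rule through
`z^j = (u^{j+2} − u¹ ε_{j+2}) / u²` shows that its partial derivatives are exactly the `η̄ᵢ`;
for `∂₁` this uses `d · C₁ = 0`, i.e. `C₁ = (u²)^{-d} C₁`. Since `H` and `g` are differentiable
with equal partial derivatives on the connected open set `U`, they differ by a constant.
-/

open Classical

/-- Partial derivative of `g : (Fin n → ℝ) → ℝ` with respect to the `i`-th coordinate. -/
noncomputable def pd {n : ℕ} (g : (Fin n → ℝ) → ℝ) (i : Fin n) (u : Fin n → ℝ) : ℝ :=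
  deriv (fun t => g (Function.update u i t)) (u i)

/-- `ε_{j+2}`: equals `1` if the (0-based) coordinate index `j+2` is the first index
`1(α)` of some Jordan block with `α ≥ 2`, and `0` otherwise.  Here `S α` is the
0-based index of the first coordinate of the `α`-th block. -/
noncomputable def eps (p r : ℕ) (S : Fin r → Fin (p + 2)) (j : Fin p) : ℝ :=
  if ∃ α : Fin r, (α : ℕ) ≠ 0 ∧ (S α : ℕ) = (j : ℕ) + 2 then 1 else 0

/-- The variables `z^j = (u^{j+2} − u¹·ε_{j+2})/u²` (0-based: `u 0 = u¹`, `u 1 = u²`). -/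
noncomputable def zc (p r : ℕ) (S : Fin r → Fin (p + 2)) (u : Fin (p + 2) → ℝ) :
    Fin p → ℝ :=
  fun j => (u j.succ.succ - u 0 * eps p r S j) / u 1

lemma pd_eq_fderiv {n : ℕ} {g : (Fin n → ℝ) → ℝ} {u : Fin n → ℝ}
    (hg : DifferentiableAt ℝ g u) (i : Fin n) : pd g i u = fderiv ℝ g u (Pi.single i 1) := by
  have hg' : HasFDerivAt g (fderiv ℝ g u) (Function.update u i (u i)) := by
    rw [Function.update_eq_self]; exact hg.hasFDerivAt
  simpa [pd, Function.comp_def] using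
    (hg'.comp_hasDerivAt (u i) (hasDerivAt_update u i (u i))).deriv

lemma fderiv_apply_eq_sum_pd {n : ℕ} {g : (Fin n → ℝ) → ℝ} {u : Fin n → ℝ}
    (hg : DifferentiableAt ℝ g u) (v : Fin n → ℝ) :
    fderiv ℝ g u v = ∑ i, v i * pd g i u := by
  conv_lhs => rw [pi_eq_sum_univ' v]
  simp [map_sum, pd_eq_fderiv hg]

lemma fderiv_eq_of_pd_eq {n : ℕ} {g h : (Fin n → ℝ) → ℝ} {u : Fin n → ℝ}
    (hg : DifferentiableAt ℝ g u) (hh : DifferentiableAt ℝ h u) (hpd : ∀ i, pd g i u = pd h i u) :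
    fderiv ℝ g u = fderiv ℝ h u := by
  ext1 v
  simp only [fderiv_apply_eq_sum_pd hg, fderiv_apply_eq_sum_pd hh, hpd]

noncomputable def rpowAntideriv (d t : ℝ) : ℝ :=
  if d = 1 then Real.log t else t ^ (1 - d) / (1 - d)

lemma hasDerivAt_rpowAntideriv (d : ℝ) {t : ℝ} (ht : 0 < t) :
    HasDerivAt (rpowAntideriv d) (t ^ (-d)) t := by
  unfold rpowAntideriv
  by_cases hd : d = 1
  · simp only [hd, if_true]
    convert Real.hasDerivAt_log ht.ne' using 1
    rw [Real.rpow_neg_one]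
  · simp only [hd, if_false]
    have h1d : 1 - d ≠ 0 := sub_ne_zero.mpr (Ne.symm hd)
    have h := (Real.hasDerivAt_rpow_const (p := 1 - d) (Or.inl ht.ne')).div_const (1 - d)
    rwa [sub_sub_cancel_left, mul_div_cancel_left₀ _ h1d] at h

open ContinuousLinearMap

section Potential

variable {p r : ℕ} (S : Fin r → Fin (p + 2))

noncomputable def zcDeriv (u : Fin (p + 2) → ℝ) : (Fin (p + 2) → ℝ) →L[ℝ] (Fin p → ℝ) :=
  pi fun j => (u 1)⁻¹ • (proj j.succ.succ - eps p r S j • proj 0 - zc p r S u j • proj 1 :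
    (Fin (p + 2) → ℝ) →L[ℝ] ℝ)

@[simp]
lemma zcDeriv_apply (u v : Fin (p + 2) → ℝ) (j : Fin p) :
    zcDeriv S u v j = (u 1)⁻¹ * (v j.succ.succ - eps p r S j * v 0 - zc p r S u j * v 1) := by
  simp [zcDeriv]

lemma hasFDerivAt_zc {u : Fin (p + 2) → ℝ} (hu : u 1 ≠ 0) :
    HasFDerivAt (zc p r S) (zcDeriv S u) u := by
  refine hasFDerivAt_pi.2 fun j => ?_
  have hnum := (hasFDerivAt_apply (𝕜 := ℝ) j.succ.succ u).sub
    ((hasFDerivAt_apply (𝕜 := ℝ) 0 u).mul_const (eps p r S j))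
  have hinv := (hasDerivAt_inv hu).comp_hasFDerivAt u (hasFDerivAt_apply (𝕜 := ℝ) 1 u)
  show HasFDerivAt (fun v => (v j.succ.succ - v 0 * eps p r S j) * (v 1)⁻¹) _ u
  refine (hnum.mul hinv).congr_fderiv ?_
  ext v
  simp only [add_apply, sub_apply, neg_apply, smul_apply, proj_apply, Function.comp_apply,
    neg_smul, smul_neg, smul_eq_mul, Pi.sub_apply, zc]
  field_simp
  ring

variable (d C₁ C₂ : ℝ) (f : (Fin p → ℝ) → ℝ)

noncomputable def metricPotential (u : Fin (p + 2) → ℝ) : ℝ :=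
  u 1 ^ (1 - d) * f (zc p r S u) + C₂ * rpowAntideriv d (u 1) + C₁ * u 0

variable {u : Fin (p + 2) → ℝ}

lemma hasFDerivAt_metricPotential (hu : 0 < u 1) (hf : DifferentiableAt ℝ f (zc p r S u)) :
    HasFDerivAt (metricPotential S d C₁ C₂ f)
      (u 1 ^ (1 - d) • (fderiv ℝ f (zc p r S u)).comp (zcDeriv S u)
        + ((1 - d) * u 1 ^ (-d) * f (zc p r S u) + C₂ * u 1 ^ (-d)) • proj 1 + C₁ • proj 0) u := by
  have hpow := (Real.hasDerivAt_rpow_const (p := 1 - d) (Or.inl hu.ne')).comp_hasFDerivAt u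
    (hasFDerivAt_apply (𝕜 := ℝ) 1 u)
  have hfz := hf.hasFDerivAt.comp u (hasFDerivAt_zc S hu.ne')
  have hphi := (hasDerivAt_rpowAntideriv d hu).comp_hasFDerivAt u (hasFDerivAt_apply (𝕜 := ℝ) 1 u)
  refine ((hpow.mul hfz).add (hphi.const_mul C₂) |>.add
    ((hasFDerivAt_apply (𝕜 := ℝ) 0 u).const_mul C₁)).congr_fderiv ?_
  ext v
  simp
  ring

lemma fderiv_metricPotential_apply (hu : 0 < u 1) (hf : DifferentiableAt ℝ f (zc p r S u))
    (v : Fin (p + 2) → ℝ) :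
    fderiv ℝ (metricPotential S d C₁ C₂ f) u v =
      u 1 ^ (-d) * (∑ j, (v j.succ.succ - eps p r S j * v 0 - zc p r S u j * v 1)
          * pd f j (zc p r S u) + ((1 - d) * f (zc p r S u) + C₂) * v 1) + C₁ * v 0 := by
  have hpow : u 1 ^ (1 - d) = u 1 ^ (-d) * u 1 := by
    rw [sub_eq_neg_add, Real.rpow_add hu, Real.rpow_one]
  rw [(hasFDerivAt_metricPotential S d C₁ C₂ f hu hf).fderiv]
  simp only [add_apply, smul_apply, comp_apply, proj_apply, smul_eq_mul, zcDeriv_apply,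
    fderiv_apply_eq_sum_pd hf, hpow, add_left_inj, mul_add, Finset.mul_sum]
  congr 1
  · refine Finset.sum_congr rfl fun j _ => ?_
    field_simp
  · ring

lemma pd_metricPotential_zero (hu : 0 < u 1) (hf : DifferentiableAt ℝ f (zc p r S u)) :
    pd (metricPotential S d C₁ C₂ f) 0 u =
      u 1 ^ (-d) * -(∑ j, eps p r S j * pd f j (zc p r S u)) + C₁ := by
  rw [pd_eq_fderiv (hasFDerivAt_metricPotential S d C₁ C₂ f hu hf).differentiableAt,
    fderiv_metricPotential_apply S d C₁ C₂ f hu hf]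
  simp

lemma pd_metricPotential_one (hu : 0 < u 1) (hf : DifferentiableAt ℝ f (zc p r S u)) :
    pd (metricPotential S d C₁ C₂ f) 1 u = u 1 ^ (-d) *
      (-(∑ j, zc p r S u j * pd f j (zc p r S u)) - (d - 1) * f (zc p r S u) + C₂) := by
  rw [pd_eq_fderiv (hasFDerivAt_metricPotential S d C₁ C₂ f hu hf).differentiableAt,
    fderiv_metricPotential_apply S d C₁ C₂ f hu hf]
  simp [Fin.succ_succ_ne_one, -mul_eq_mul_left_iff]
  ring

lemma pd_metricPotential_succ_succ (hu : 0 < u 1) (hf : DifferentiableAt ℝ f (zc p r S u))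
    (k : Fin p) :
    pd (metricPotential S d C₁ C₂ f) k.succ.succ u = u 1 ^ (-d) * pd f k (zc p r S u) := by
  rw [pd_eq_fderiv (hasFDerivAt_metricPotential S d C₁ C₂ f hu hf).differentiableAt,
    fderiv_metricPotential_apply S d C₁ C₂ f hu hf]
  simp [Pi.single_apply, (Fin.succ_succ_ne_one k).symm]

end Potential

/-- Indices are 0-based: `n = p + 2`, `r = q + 1`, `S α` is the index of the first coordinate
`1(α)` of the `α`-th block, `∂₁H = pd H 0`, `∂₂H = pd H 1` and `∂_{j+3}H = pd H j.succ.succ`. -/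
theorem stmt_5 (p q : ℕ)
    (S : Fin (q + 1) → Fin (p + 2))
    (d : ℝ)
    (U : Set (Fin (p + 2) → ℝ)) (hUopen : IsOpen U) (hUconv : Convex ℝ U)
    (hUpos : ∀ u ∈ U, 0 < u 1)
    (f : (Fin p → ℝ) → ℝ) (hf : ContDiff ℝ 1 f)
    (C₁ C₂ : ℝ) (hdC₁ : d * C₁ = 0)
    (H : (Fin (p + 2) → ℝ) → ℝ) (hH : ContDiffOn ℝ 2 H U)
    (hdH3 : ∀ u ∈ U, ∀ j : Fin p,
      pd H j.succ.succ u = (u 1) ^ (-d) * pd f j (zc p (q + 1) S u))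
    (hdH2 : ∀ u ∈ U,
      pd H 1 u = (u 1) ^ (-d) *
        (-(∑ j, zc p (q + 1) S u j * pd f j (zc p (q + 1) S u))
          - (d - 1) * f (zc p (q + 1) S u) + C₂))
    (hdH1 : ∀ u ∈ U,
      pd H 0 u = (u 1) ^ (-d) *
        (-(∑ j, eps p (q + 1) S j * pd f j (zc p (q + 1) S u)) + C₁)) :
    ∃ C₃ : ℝ, ∀ u ∈ U,
      H u = (u 1) ^ (1 - d) * f (zc p (q + 1) S u)
        + C₂ * (if d = 1 then Real.log (u 1) else (u 1) ^ (1 - d) / (1 - d))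
        + C₁ * u 0 + C₃ := by
  set g := metricPotential S d C₁ C₂ f
  have hfd : Differentiable ℝ f := hf.differentiable one_ne_zero
  have hHd : DifferentiableOn ℝ H U := hH.differentiableOn (by norm_num)
  have hgd : DifferentiableOn ℝ g U := fun u hu =>
    (hasFDerivAt_metricPotential S d C₁ C₂ f (hUpos u hu) (hfd _)).differentiableAt
      |>.differentiableWithinAt
  have hpd : ∀ u ∈ U, ∀ i, pd H i u = pd g i u := by
    intro u hu i
    have hu1 := hUpos u hu
    induction i using Fin.cases with
    | zero =>
      have hC₁ : u 1 ^ (-d) * C₁ = C₁ := by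
        rcases mul_eq_zero.1 hdC₁ with rfl | rfl <;> simp
      rw [hdH1 u hu, pd_metricPotential_zero S d C₁ C₂ f hu1 (hfd _), mul_add, hC₁]
    | succ i =>
      induction i using Fin.cases with
      | zero => rw [Fin.succ_zero_eq_one, hdH2 u hu, pd_metricPotential_one S d C₁ C₂ f hu1 (hfd _)]
      | succ k => rw [hdH3 u hu k, pd_metricPotential_succ_succ S d C₁ C₂ f hu1 (hfd _) k]
  obtain ⟨C₃, hC₃⟩ := hUopen.exists_eq_add_of_fderiv_eq hUconv.isPreconnected hHd hgd
    fun u hu => fderiv_eq_of_pd_eq (hHd.differentiableAt (hUopen.mem_nhds hu))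
      (hgd.differentiableAt (hUopen.mem_nhds hu)) (hpd u hu)
  exact ⟨C₃, fun u hu => hC₃ hu⟩
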